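/- For m_1, m_2 ∈ L^∞(T) and the operators S_i f(z) = m_i(z) f(z^N) on L^2(T), the composition S_1* S_2 is the operator of multiplication by the function z ↦ (1/N) Σ_{w^N = z} conj(m_1(w)) m_2(w). -/

import Mathlib

/-!
Pairing with `u ∈ L²` gives `⟪S₁ u, S₂ f⟫ = ∫ F z * H (z ^ N)` with `F = conj m₁ * m₂` and
`H = conj u * f`. Haar measure is invariant under rotation by `N`-th roots of unity, so `F` may be
replaced by its average over these rotations, which is the fiber average `g` of `F` evaluated at
`z ^ N`; since `z ↦ z ^ N` preserves Haar measure, the integral becomes `∫ g * H = ⟪u, g * f⟫`.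
That `g` is essentially bounded comes from writing it as the rotation average composed with the
section `z ↦ exp (i arg z / N)`, which is quasi-measure-preserving because `z ↦ z ^ N` maps null
sets to null sets: the saturation of a null set is the finite union of its rotates.
-/

open MeasureTheory ComplexConjugate

noncomputable instance : MeasurableSpace Circle := borel Circle
instance : BorelSpace Circle := ⟨rfl⟩

open ZMod

theorem MeasureTheory.MemLp.comp_quasiMeasurePreserving_top {α β E : Type*}
    [MeasurableSpace α] [MeasurableSpace β] [NormedAddCommGroup E] {μ : Measure α}
    {ν : Measure β} {f : α → β} {g : β → E} (hg : MemLp g ⊤ ν)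
    (hf : Measure.QuasiMeasurePreserving f μ ν) : MemLp (g ∘ f) ⊤ μ :=
  memLp_top_of_bound (hg.1.comp_quasiMeasurePreserving hf) _
    (hf.ae (ae_le_lpNorm_exponent_top hg))

theorem MeasureTheory.L2.ae_eq_of_forall_inner_eq {α 𝕜 E : Type*} [MeasurableSpace α]
    [RCLike 𝕜] [NormedAddCommGroup E] [InnerProductSpace 𝕜 E] {μ : Measure α}
    {v : Lp E 2 μ} {φ : α → E} (hφ : MemLp φ 2 μ)
    (h : ∀ u : Lp E 2 μ, inner 𝕜 u v = ∫ z, inner 𝕜 (u z) (φ z) ∂μ) : v =ᵐ[μ] φ := by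
  have hv : v = hφ.toLp φ := ext_inner_left 𝕜 fun u => by
    rw [h u, L2.inner_def]
    refine integral_congr_ae ?_
    filter_upwards [hφ.coeFn_toLp] with z hz
    rw [hz]
  rw [hv]
  exact hφ.coeFn_toLp

namespace Circle

variable {N : ℕ} [NeZero N]

lemma toCircle_pow_eq_one (j : ZMod N) : toCircle j ^ N = 1 := by
  rw [← AddChar.map_nsmul_eq_pow, nsmul_eq_mul, ZMod.natCast_self, zero_mul,
    AddChar.map_zero_eq_one]

lemma exists_toCircle_eq_of_pow_eq_one {u : Circle} (hu : u ^ N = 1) :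
    ∃ j : ZMod N, toCircle j = u := by
  obtain ⟨j, hj⟩ := (bijective_rootsOfUnityAddChar N).2
    ⟨_root_.toUnits u, (mem_rootsOfUnity' N _).2 hu⟩
  exact ⟨j, congrArg (fun v : rootsOfUnity N Circle => ((v : Circleˣ) : Circle)) hj⟩

lemma pow_eq_pow_iff {v w : Circle} : v ^ N = w ^ N ↔ ∃ j : ZMod N, toCircle j * w = v := by
  constructor
  · intro h
    obtain ⟨j, hj⟩ := exists_toCircle_eq_of_pow_eq_one (N := N) (u := v / w)
      (by rw [div_pow, h, div_self'])
    exact ⟨j, by rw [hj, div_mul_cancel]⟩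
  · rintro ⟨j, rfl⟩
    rw [mul_pow, toCircle_pow_eq_one, one_mul]

lemma finsum_mem_pow_eq_pow {M : Type*} [AddCommMonoid M] (F : Circle → M) (w : Circle) :
    ∑ᶠ v ∈ {v : Circle | v ^ N = w ^ N}, F v = ∑ j : ZMod N, F (toCircle j * w) := by
  have hfiber : {v : Circle | v ^ N = w ^ N} = Set.range fun j : ZMod N => toCircle j * w := by
    ext v
    exact pow_eq_pow_iff
  have hinj : Function.Injective fun j : ZMod N => toCircle j * w :=
    (mul_left_injective w).comp injective_toCircle
  rw [hfiber, finsum_mem_range hinj, finsum_eq_sum_of_fintype]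

lemma preimage_image_pow (B : Set Circle) :
    (· ^ N) ⁻¹' ((· ^ N) '' B) = ⋃ j : ZMod N, (toCircle j * ·) ⁻¹' B := by
  ext w
  simp only [Set.mem_preimage, Set.mem_image, Set.mem_iUnion, pow_eq_pow_iff]
  constructor
  · rintro ⟨v, hv, j, rfl⟩
    exact ⟨j, hv⟩
  · rintro ⟨j, hj⟩
    exact ⟨_, hj, j, rfl⟩

noncomputable def nthRoot (N : ℕ) (z : Circle) : Circle := exp (Complex.arg z / N)

omit [NeZero N] in
lemma measurable_nthRoot : Measurable (nthRoot N) :=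
  (map_continuous exp).measurable.comp (by fun_prop)

lemma nthRoot_pow (z : Circle) : nthRoot N z ^ N = z := by
  rw [nthRoot, ← exp_natCast_mul, mul_div_cancel₀ _ (Nat.cast_ne_zero.2 (NeZero.ne N)), exp_arg]

noncomputable def fiberAverage (N : ℕ) (F : Circle → ℂ) (z : Circle) : ℂ :=
  (N : ℂ)⁻¹ * ∑ᶠ w ∈ {w : Circle | w ^ N = z}, F w

noncomputable def rootAverage (N : ℕ) [NeZero N] (F : Circle → ℂ) (z : Circle) : ℂ :=
  (N : ℂ)⁻¹ * ∑ j : ZMod N, F (toCircle j * z)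

lemma fiberAverage_pow (F : Circle → ℂ) (z : Circle) :
    fiberAverage N F (z ^ N) = rootAverage N F z := by
  rw [fiberAverage, rootAverage, finsum_mem_pow_eq_pow]

lemma fiberAverage_eq_rootAverage_comp (F : Circle → ℂ) :
    fiberAverage N F = rootAverage N F ∘ nthRoot N := by
  ext z
  conv_lhs => rw [← nthRoot_pow (N := N) z]
  exact fiberAverage_pow F _

lemma rootAverage_mul_comp_pow (F H : Circle → ℂ) (z : Circle) :
    rootAverage N (fun w => F w * H (w ^ N)) z = rootAverage N F z * H (z ^ N) := by
  simp only [rootAverage, mul_pow, toCircle_pow_eq_one, one_mul, Finset.sum_mul, mul_assoc]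

variable (μ : Measure Circle) [μ.IsHaarMeasure]

lemma measurePreserving_pow : MeasurePreserving (· ^ N) μ μ :=
  (powMonoidHom N).measurePreserving (continuous_pow N)
    (fun z => ⟨nthRoot N z, nthRoot_pow z⟩) rfl

lemma measure_image_pow_eq_zero {A : Set Circle} (hA : μ A = 0) : μ ((· ^ N) '' A) = 0 := by
  obtain ⟨B, hAB, hB, hB0⟩ := exists_measurable_superset_of_null hA
  have hsat : MeasurableSet ((· ^ N) ⁻¹' ((· ^ N) '' B)) := by
    rw [preimage_image_pow]
    exact .iUnion fun j => hB.preimage (measurable_const_mul _)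
  -- `nthRoot` is a section of `z ↦ z ^ N`, so it pulls the saturation of `B` back to its image.
  have himage : (· ^ N) '' B = nthRoot N ⁻¹' ((· ^ N) ⁻¹' ((· ^ N) '' B)) := by
    ext z
    simp only [Set.mem_preimage, nthRoot_pow]
  have hmeas : MeasurableSet ((· ^ N) '' B) := himage ▸ measurable_nthRoot hsat
  refine measure_mono_null (Set.image_mono hAB) ?_
  rw [← (measurePreserving_pow (N := N) μ).measure_preimage hmeas.nullMeasurableSet,
    preimage_image_pow, measure_iUnion_null_iff]
  intro j
  rw [(measurePreserving_mul_left μ _).measure_preimage hB.nullMeasurableSet, hB0]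

lemma quasiMeasurePreserving_nthRoot : Measure.QuasiMeasurePreserving (nthRoot N) μ μ := by
  refine ⟨measurable_nthRoot, Measure.AbsolutelyContinuous.mk fun A hA hA0 => ?_⟩
  rw [Measure.map_apply measurable_nthRoot hA]
  refine measure_mono_null (fun z hz => ?_) (measure_image_pow_eq_zero (N := N) μ hA0)
  exact ⟨nthRoot N z, hz, nthRoot_pow z⟩

lemma integral_rootAverage {F : Circle → ℂ} (hF : Integrable F μ) :
    ∫ z, rootAverage N F z ∂μ = ∫ z, F z ∂μ := by
  simp only [rootAverage, integral_const_mul,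
    integral_finsetSum _ fun j _ => hF.comp_mul_left (toCircle j), integral_mul_left_eq_self,
    Finset.sum_const, Finset.card_univ, ZMod.card, nsmul_eq_mul]
  rw [← mul_assoc, inv_mul_cancel₀ (Nat.cast_ne_zero.2 (NeZero.ne N)), one_mul]

lemma memLp_top_rootAverage {F : Circle → ℂ} (hF : MemLp F ⊤ μ) :
    MemLp (rootAverage N F) ⊤ μ :=
  (memLp_finsetSum _ fun j _ =>
    hF.comp_measurePreserving (measurePreserving_mul_left μ (toCircle j))).const_mul _

lemma memLp_top_fiberAverage {F : Circle → ℂ} (hF : MemLp F ⊤ μ) :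
    MemLp (fiberAverage N F) ⊤ μ := by
  rw [fiberAverage_eq_rootAverage_comp]
  exact (memLp_top_rootAverage μ hF).comp_quasiMeasurePreserving_top
    (quasiMeasurePreserving_nthRoot μ)

theorem integral_mul_comp_pow {F H : Circle → ℂ} (hF : MemLp F ⊤ μ) (hH : Integrable H μ) :
    ∫ z, F z * H (z ^ N) ∂μ = ∫ z, fiberAverage N F z * H z ∂μ := by
  have hpow := measurePreserving_pow (N := N) μ
  have hint : Integrable (fun z => F z * H (z ^ N)) μ :=
    (hpow.integrable_comp_of_integrable hH).mul_of_top_right hF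
  calc ∫ z, F z * H (z ^ N) ∂μ
      = ∫ z, rootAverage N (fun w => F w * H (w ^ N)) z ∂μ := (integral_rootAverage μ hint).symm
    _ = ∫ z, fiberAverage N F (z ^ N) * H (z ^ N) ∂μ := by
      simp only [rootAverage_mul_comp_pow, fiberAverage_pow]
    _ = ∫ z, fiberAverage N F z * H z ∂μ := by
      have hmeas := (memLp_top_fiberAverage (N := N) μ hF).1.mul hH.1
      conv_rhs => rw [← hpow.map_eq]
      exact (integral_map hpow.aemeasurable (by rwa [hpow.map_eq])).symm

end Circle

theorem adjoint_comp_is_multiplication_general (N : ℕ) (hN : 2 ≤ N) (μ : Measure Circle)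
    [μ.IsHaarMeasure]
    (m₁ m₂ : Circle → ℂ) (hm₁ : MemLp m₁ ⊤ μ) (hm₂ : MemLp m₂ ⊤ μ)
    (S₁ S₂ : Lp ℂ 2 μ →L[ℂ] Lp ℂ 2 μ)
    (hS₁ : ∀ f : Lp ℂ 2 μ, (S₁ f : Circle → ℂ) =ᵐ[μ] fun z => m₁ z * f (z ^ N))
    (hS₂ : ∀ f : Lp ℂ 2 μ, (S₂ f : Circle → ℂ) =ᵐ[μ] fun z => m₂ z * f (z ^ N)) :
    ∀ f : Lp ℂ 2 μ, (ContinuousLinearMap.adjoint S₁ (S₂ f) : Circle → ℂ)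
      =ᵐ[μ] fun z =>
        ((N : ℂ)⁻¹ * ∑ᶠ w ∈ {w : Circle | w ^ N = z}, conj (m₁ w) * m₂ w) * f z := by
  intro f
  have : NeZero N := ⟨by omega⟩
  set F : Circle → ℂ := fun w => conj (m₁ w) * m₂ w
  have hF : MemLp F ⊤ μ := hm₂.mul' hm₁.star
  refine L2.ae_eq_of_forall_inner_eq (𝕜 := ℂ)
    ((Lp.memLp f).mul' (Circle.memLp_top_fiberAverage μ hF)) fun u => ?_
  rw [ContinuousLinearMap.adjoint_inner_right, L2.inner_def]
  calc ∫ z, inner ℂ (S₁ u z) (S₂ f z) ∂μ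
      = ∫ z, F z * inner ℂ (u (z ^ N)) (f (z ^ N)) ∂μ := by
        refine integral_congr_ae ?_
        filter_upwards [hS₁ u, hS₂ f] with z h₁ h₂
        simp only [h₁, h₂, RCLike.inner_apply', F, map_mul]
        ring
    _ = ∫ z, Circle.fiberAverage N F z * inner ℂ (u z) (f z) ∂μ :=
        Circle.integral_mul_comp_pow μ hF (L2.integrable_inner u f)
    _ = ∫ z, inner ℂ (u z) (Circle.fiberAverage N F z * f z) ∂μ := by
        simp only [RCLike.inner_apply', mul_left_comm]

/-- $S_1^*S_2$ is multiplication by $z\mapsto\frac1N\sum_{w^N=z}\overline{m_1(w)}m_2(w)$. -/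
theorem adjoint_comp_is_multiplication (N : ℕ) (hN : 2 ≤ N) (μ : Measure Circle)
    [μ.IsHaarMeasure] [IsProbabilityMeasure μ]
    (m₁ m₂ : Circle → ℂ) (hm₁ : MemLp m₁ ⊤ μ) (hm₂ : MemLp m₂ ⊤ μ)
    (S₁ S₂ : Lp ℂ 2 μ →L[ℂ] Lp ℂ 2 μ)
    (hS₁ : ∀ f : Lp ℂ 2 μ, (S₁ f : Circle → ℂ) =ᵐ[μ] fun z => m₁ z * f (z ^ N))
    (hS₂ : ∀ f : Lp ℂ 2 μ, (S₂ f : Circle → ℂ) =ᵐ[μ] fun z => m₂ z * f (z ^ N)) :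
    ∀ f : Lp ℂ 2 μ, (ContinuousLinearMap.adjoint S₁ (S₂ f) : Circle → ℂ)
      =ᵐ[μ] fun z =>
        ((N : ℂ)⁻¹ * ∑ᶠ w ∈ {w : Circle | w ^ N = z}, conj (m₁ w) * m₂ w) * f z :=
  adjoint_comp_is_multiplication_general N hN μ m₁ m₂ hm₁ hm₂ S₁ S₂ hS₁ hS₂
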